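/- Let G be a simple graph with maximum degree at most D, and let S and T be sets of vertices of G. Suppose every connected component of the subgraph of G induced by S has at most m vertices, and |T \ S| ≤ k with k ≥ 1. Then every connected component of the subgraph of G induced by S ∪ T either contains no vertex of T \ S and equals a connected component of the subgraph induced by S, or has at most k(1 + D·m) vertices. -/

import Mathlib

/-- Reachability inside a vertex subset `A`: `ReachIn G A v y` holds if there is a
path from `v` to `y` all of whose steps use edges of `G` with both endpoints in `A`.
For `v ∈ A`, the set `{y | ReachIn G A v y}` is the vertex set of the connected
component of `v` in the subgraph of `G` induced by `A`. -/
def ReachIn {V : Type*} (G : SimpleGraph V) (A : Set V) (v y : V) : Prop :=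
  Relation.ReflTransGen (fun a b => G.Adj a b ∧ a ∈ A ∧ b ∈ A) v y

/-!
Let `C` be the component of `v` in `G[S ∪ T]` and suppose it meets `T \ S` in some `t₀`.
Any `y ∈ C ∩ S` is joined to `t₀` inside `S ∪ T`; the path has a last vertex `x` of the
`S`-component of `y` before it first leaves `S`, and then steps to some `t ∈ T \ S`. So `C` is
covered by `T \ S` together with the `S`-components of the at most `D` neighbours in `S` of each
`t ∈ T \ S`, giving `|C| ≤ k + k·D·m`. If `C` avoids `T \ S`, it lies inside `S` and is an
`S`-component.
-/

open Set

lemma Relation.ReflTransGen.exists_boundary_step {α : Type*} {r : α → α → Prop}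
    {p : α → Prop} {a b : α} (h : Relation.ReflTransGen r a b) (ha : p a) (hb : ¬ p b) :
    ∃ c d, Relation.ReflTransGen (fun x y => r x y ∧ p x ∧ p y) a c ∧ p c ∧ r c d ∧ ¬ p d := by
  induction h using Relation.ReflTransGen.head_induction_on with
  | refl => exact absurd ha hb
  | @head a a' haa' _ ih =>
    by_cases ha' : p a'
    · obtain ⟨c, d, hac, hc, hcd, hd⟩ := ih ha'
      exact ⟨c, d, .head ⟨haa', ha, ha'⟩ hac, hc, hcd, hd⟩
    · exact ⟨a, a', .refl, ha, haa', ha'⟩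

lemma Set.ncard_biUnion_le_ncard_mul {ι α : Type*} {t : Set ι} (ht : t.Finite)
    (s : ι → Set α) {b : ℕ} (hs : ∀ i ∈ t, (s i).ncard ≤ b) :
    (⋃ i ∈ t, s i).ncard ≤ t.ncard * b := by
  lift t to Finset ι using ht
  rw [ncard_coe_finset]
  calc (⋃ i ∈ t, s i).ncard ≤ ∑ i ∈ t, (s i).ncard := by
        simpa using t.set_ncard_biUnion_le s
    _ ≤ t.card * b := by simpa using Finset.sum_le_card_nsmul t _ b hs

namespace ReachIn

variable {V : Type*} {G : SimpleGraph V} {A B : Set V} {u v y : V}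

lemma symm (h : ReachIn G A v y) : ReachIn G A y v := by
  induction h with
  | refl => exact .refl
  | tail _ hbc ih => exact .head ⟨hbc.1.symm, hbc.2.2, hbc.2.1⟩ ih

lemma trans (h : ReachIn G A u v) (h' : ReachIn G A v y) : ReachIn G A u y :=
  Relation.ReflTransGen.trans h h'

lemma mono (hAB : A ⊆ B) (h : ReachIn G A v y) : ReachIn G B v y :=
  Relation.ReflTransGen.mono (fun _ _ hab => ⟨hab.1, hAB hab.2.1, hAB hab.2.2⟩) _ _ h

lemma mem (h : ReachIn G A v y) (hv : v ∈ A) : y ∈ A := by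
  induction h with
  | refl => exact hv
  | tail _ hbc _ => exact hbc.2.2

lemma of_forall_reachIn_mem (h : ReachIn G A v y)
    (hB : ∀ z, ReachIn G A v z → z ∈ B) : ReachIn G B v y := by
  induction h with
  | refl => exact .refl
  | @tail b c hvb hbc ih => exact .tail ih ⟨hbc.1, hB b hvb, hB c (.tail hvb hbc)⟩

lemma setOf_eq_of_subset (hBA : B ⊆ A) (hB : {y | ReachIn G A v y} ⊆ B) :
    {y | ReachIn G A v y} = {y | ReachIn G B v y} :=
  Subset.antisymm (fun _ hy => of_forall_reachIn_mem hy hB) (fun _ hy => hy.mono hBA)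

lemma exists_boundary_adj (h : ReachIn G A y v) (hy : y ∈ B) (hv : v ∉ B) :
    ∃ x t, ReachIn G B y x ∧ x ∈ B ∧ G.Adj x t ∧ t ∈ A \ B := by
  obtain ⟨x, t, hyx, hx, hxt, ht⟩ := Relation.ReflTransGen.exists_boundary_step h hy hv
  exact ⟨x, t, Relation.ReflTransGen.mono (fun _ _ hab => ⟨hab.1.1, hab.2⟩) _ _ hyx, hx, hxt.1,
    hxt.2.2, ht⟩

end ReachIn

def adjacentComponents {V : Type*} (G : SimpleGraph V) (S : Set V) (t : V) : Set V :=
  ⋃ x ∈ G.neighborSet t ∩ S, {y | ReachIn G S x y}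

lemma ncard_adjacentComponents_le {V : Type*} [Finite V] (G : SimpleGraph V) {S : Set V}
    {t : V} {D m : ℕ} (hD : (G.neighborSet t).ncard ≤ D)
    (hS : ∀ v ∈ S, {y | ReachIn G S v y}.ncard ≤ m) :
    (adjacentComponents G S t).ncard ≤ D * m :=
  calc (adjacentComponents G S t).ncard ≤ (G.neighborSet t ∩ S).ncard * m :=
        ncard_biUnion_le_ncard_mul (toFinite _) _ fun x hx => hS x hx.2
    _ ≤ D * m := Nat.mul_le_mul_right m ((ncard_le_ncard inter_subset_left).trans hD)

lemma setOf_reachIn_union_subset {V : Type*} {G : SimpleGraph V} {S T : Set V} {v t₀ : V}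
    (hvt₀ : ReachIn G (S ∪ T) v t₀) (ht₀ : t₀ ∈ T \ S) :
    {y | ReachIn G (S ∪ T) v y} ⊆ (T \ S) ∪ ⋃ t ∈ T \ S, adjacentComponents G S t := by
  intro y hvy
  have hyt₀ : ReachIn G (S ∪ T) y t₀ := hvy.symm.trans hvt₀
  by_cases hyS : y ∈ S
  · obtain ⟨x, t, hyx, hxS, hxt, ht⟩ := hyt₀.exists_boundary_adj hyS ht₀.2
    rw [union_sdiff_left] at ht
    exact Or.inr (mem_biUnion ht (mem_biUnion ⟨hxt.symm, hxS⟩ hyx.symm))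
  · exact Or.inl ⟨(hyt₀.symm.mem (Or.inr ht₀.1)).resolve_left hyS, hyS⟩

theorem merging_components_general {V : Type*} [Fintype V] (G : SimpleGraph V)
    (D m k : ℕ)
    (hD : ∀ x : V, Nat.card (G.neighborSet x) ≤ D)
    (S T : Set V)
    (hS : ∀ v ∈ S, Nat.card {y | ReachIn G S v y} ≤ m)
    (hT : Nat.card (T \ S : Set V) ≤ k) :
    ∀ v ∈ S ∪ T,
      ({y | ReachIn G (S ∪ T) v y} ∩ (T \ S) = ∅ ∧
          ∃ w ∈ S, {y | ReachIn G (S ∪ T) v y} = {y | ReachIn G S w y}) ∨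
        Nat.card {y | ReachIn G (S ∪ T) v y} ≤ k * (1 + D * m) := by
  simp only [Nat.card_coe_set_eq] at hD hS hT ⊢
  intro v hv
  by_cases hC : {y | ReachIn G (S ∪ T) v y} ∩ (T \ S) = ∅
  · have hCS : {y | ReachIn G (S ∪ T) v y} ⊆ S := fun y hvy =>
      by_contra fun hyS => (eq_empty_iff_forall_notMem.mp hC) y
        ⟨hvy, (hvy.mem hv).resolve_left hyS, hyS⟩
    exact Or.inl ⟨hC, v, hCS .refl, ReachIn.setOf_eq_of_subset subset_union_left hCS⟩
  · obtain ⟨t₀, hvt₀, ht₀⟩ := nonempty_iff_ne_empty.mpr hC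
    refine Or.inr ?_
    calc {y | ReachIn G (S ∪ T) v y}.ncard
        ≤ ((T \ S) ∪ ⋃ t ∈ T \ S, adjacentComponents G S t).ncard :=
          ncard_le_ncard (setOf_reachIn_union_subset hvt₀ ht₀)
      _ ≤ (T \ S).ncard + (⋃ t ∈ T \ S, adjacentComponents G S t).ncard := ncard_union_le _ _
      _ ≤ k + k * (D * m) := add_le_add hT <|
          (ncard_biUnion_le_ncard_mul (toFinite _) _ fun t _ =>
            ncard_adjacentComponents_le G (hD t) hS).trans (Nat.mul_le_mul_right _ hT)
      _ = k * (1 + D * m) := by ring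

/-- Deterministic merging lemma.  Let `G` be a (finite) simple graph of maximum degree
at most `D`, and let `S`, `T` be vertex sets such that every component of the subgraph
induced by `S` has at most `m` vertices and `|T \ S| ≤ k` with `k ≥ 1`.  Then every
component of the subgraph induced by `S ∪ T` either contains no vertex of `T \ S`
and equals a component of the subgraph induced by `S`, or has at most `k(1 + D·m)`
vertices. -/
theorem merging_components {V : Type*} [Fintype V] (G : SimpleGraph V)
    (D m k : ℕ) (hk : 1 ≤ k)
    (hD : ∀ x : V, Nat.card (G.neighborSet x) ≤ D)
    (S T : Set V)
    (hS : ∀ v ∈ S, Nat.card {y | ReachIn G S v y} ≤ m)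
    (hT : Nat.card (T \ S : Set V) ≤ k) :
    ∀ v ∈ S ∪ T,
      ({y | ReachIn G (S ∪ T) v y} ∩ (T \ S) = ∅ ∧
          ∃ w ∈ S, {y | ReachIn G (S ∪ T) v y} = {y | ReachIn G S w y}) ∨
        Nat.card {y | ReachIn G (S ∪ T) v y} ≤ k * (1 + D * m) :=
  merging_components_general G D m k hD S T hS hT
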